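/- The number of chains X_1 ⊆ X_2 of transfer systems on the chain {0,1,2} (i.e., pairs of transfer systems related by inclusion) is exactly 13. -/
import Mathlib

/-- A transfer system on the chain `{0 < 1 < ... < n}`: a relation contained in
the order relation (and supported on the chain), reflexive, transitive, and
satisfying restriction. -/
def IsTransferSystem (n : ℕ) (R : ℕ → ℕ → Prop) : Prop :=
  (∀ a b, R a b → a ≤ b ∧ b ≤ n) ∧
  (∀ a, a ≤ n → R a a) ∧
  (∀ a b c, R a b → R b c → R a c) ∧
  (∀ k h m, R k h → m ≤ h → R (min k m) m)

def mkR (t : Bool × Bool × Bool) : ℕ → ℕ → Prop := fun a b =>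
  (a = b ∧ b ≤ 2) ∨ (a = 0 ∧ b = 1 ∧ t.1 = true) ∨ (a = 0 ∧ b = 2 ∧ t.2.1 = true) ∨
  (a = 1 ∧ b = 2 ∧ t.2.2 = true)

open Classical in
noncomputable def encB (R : ℕ → ℕ → Prop) : Bool × Bool × Bool :=
  (decide (R 0 1), decide (R 0 2), decide (R 1 2))

abbrev Good (t : Bool × Bool × Bool) : Prop :=
  (t.1 = true → t.2.2 = true → t.2.1 = true) ∧ (t.2.1 = true → t.1 = true)

lemma mk_ts {t : Bool × Bool × Bool} (h : Good t) : IsTransferSystem 2 (mkR t) := by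
  obtain ⟨h1, h2⟩ := h
  refine ⟨?_, ?_, ?_, ?_⟩
  · rintro a b (⟨rfl, hb⟩ | ⟨rfl, rfl, _⟩ | ⟨rfl, rfl, _⟩ | ⟨rfl, rfl, _⟩) <;> omega
  · intro a ha; exact Or.inl ⟨rfl, ha⟩
  · rintro a b c (⟨ha, hb⟩ | ⟨ha, hb, hx⟩ | ⟨ha, hb, hy⟩ | ⟨ha, hb, hz⟩)
      (⟨hb', hc⟩ | ⟨hb', hc, hx'⟩ | ⟨hb', hc, hy'⟩ | ⟨hb', hc, hz'⟩) <;>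
      unfold mkR <;> subst_vars <;> simp_all <;> omega
  · rintro k h m (⟨rfl, hb⟩ | ⟨hk, hh, hx⟩ | ⟨hk, hh, hy⟩ | ⟨hk, hh, hz⟩) hm <;>
      unfold mkR <;> subst_vars <;>
      (try omega) <;> interval_cases m <;> simp_all <;> omega

open Classical in
lemma ts_char {R : ℕ → ℕ → Prop} (h : IsTransferSystem 2 R) (a b : ℕ) :
    R a b ↔ mkR (encB R) a b := by
  obtain ⟨hsub, hrefl, htrans, hres⟩ := h
  constructor
  · intro hab
    obtain ⟨hle, hb⟩ := hsub a b hab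
    unfold mkR encB
    interval_cases b <;> interval_cases a <;> simp_all
  · rintro (⟨rfl, hb⟩ | ⟨rfl, rfl, hx⟩ | ⟨rfl, rfl, hy⟩ | ⟨rfl, rfl, hz⟩)
    · exact hrefl _ hb
    · simpa [encB] using hx
    · simpa [encB] using hy
    · simpa [encB] using hz

open Classical in
lemma good_of_ts {R : ℕ → ℕ → Prop} (h : IsTransferSystem 2 R) : Good (encB R) := by
  obtain ⟨hsub, hrefl, htrans, hres⟩ := h
  constructor
  · intro hx hz
    simp only [encB, decide_eq_true_eq] at *
    exact htrans 0 1 2 hx hz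
  · intro hy
    simp only [encB, decide_eq_true_eq] at *
    have := hres 0 2 1 hy (by norm_num)
    simpa using this

open Classical in
lemma enc_mk (t : Bool × Bool × Bool) : encB (mkR t) = t := by
  obtain ⟨x, y, z⟩ := t
  unfold encB
  refine Prod.ext ?_ (Prod.ext ?_ ?_) <;> simp <;>
    · cases x <;> cases y <;> cases z <;> simp [mkR]

abbrev P (q : (Bool × Bool × Bool) × (Bool × Bool × Bool)) : Prop :=
  Good q.1 ∧ Good q.2 ∧ (q.1.1 = true → q.2.1 = true) ∧
    (q.1.2.1 = true → q.2.2.1 = true) ∧ (q.1.2.2 = true → q.2.2.2 = true)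

noncomputable def myEquiv :
    {q : (Bool × Bool × Bool) × (Bool × Bool × Bool) // P q} ≃
    {p : (ℕ → ℕ → Prop) × (ℕ → ℕ → Prop) //
      IsTransferSystem 2 p.1 ∧ IsTransferSystem 2 p.2 ∧ ∀ a b, p.1 a b → p.2 a b} := by
  classical
  refine ⟨fun q => ⟨(mkR q.1.1, mkR q.1.2), mk_ts q.2.1, mk_ts q.2.2.1, ?_⟩,
    fun p => ⟨(encB p.1.1, encB p.1.2), ?_⟩, ?_, ?_⟩
  · obtain ⟨q, hg1, hg2, hi1, hi2, hi3⟩ := q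
    rintro a b (⟨rfl, hb⟩ | ⟨rfl, rfl, hx⟩ | ⟨rfl, rfl, hy⟩ | ⟨rfl, rfl, hz⟩)
    · exact Or.inl ⟨rfl, hb⟩
    · exact Or.inr (Or.inl ⟨rfl, rfl, hi1 hx⟩)
    · exact Or.inr (Or.inr (Or.inl ⟨rfl, rfl, hi2 hy⟩))
    · exact Or.inr (Or.inr (Or.inr ⟨rfl, rfl, hi3 hz⟩))
  · obtain ⟨p, h1, h2, h12⟩ := p
    refine ⟨good_of_ts h1, good_of_ts h2, ?_, ?_, ?_⟩ <;>
      · simp only [encB, decide_eq_true_eq]; exact h12 _ _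
  · rintro ⟨⟨t1, t2⟩, hq⟩
    exact Subtype.ext (Prod.ext (enc_mk t1) (enc_mk t2))
  · rintro ⟨⟨R1, R2⟩, h1, h2, h12⟩
    refine Subtype.ext (Prod.ext ?_ ?_) <;>
      · funext a b; exact propext ((ts_char (by assumption) a b)).symm

theorem num_nested_pairs_of_transfer_systems_chain_2 :
    Nat.card {p : (ℕ → ℕ → Prop) × (ℕ → ℕ → Prop) //
      IsTransferSystem 2 p.1 ∧ IsTransferSystem 2 p.2 ∧
      ∀ a b, p.1 a b → p.2 a b} = 13 := by
  rw [← Nat.card_congr myEquiv]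
  simp only [Nat.card_eq_fintype_card]
  decide
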